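/- arXiv:2511.06878 — 10 statements merged into one kernel-verified Lean document; each statement's English description precedes it below -/
import Mathlib

section
/- The property (sm) is stable under equivalence of sequences: if M and N are sequences of positive reals with M ≈ N (i.e., there are C, h > 0 with M_p ≤ Ch^pN_p and N_p ≤ Ch^pM_p for all p), and M satisfies (sm), then N satisfies (sm). -/
/-- The property `(sm)` is stable under equivalence of sequences. -/
theorem stmt_4 (M N : ℕ → ℝ) (hMpos : ∀ p, 0 < M p) (hNpos : ∀ p, 0 < N p)
    (hequiv : ∃ C > 0, ∃ h > 0, ∀ p, M p ≤ C * h ^ p * N p ∧ N p ≤ C * h ^ p * M p)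
    (hsm : ∃ C₀ > 0, ∃ H > 1, ∀ p,
        Real.log ((M (p + 2) / M (p + 1)) / (M (p + 1) / M p)) ≤ C₀ * H ^ (p + 1)) :
    ∃ C₀ > 0, ∃ H > 1, ∀ p,
        Real.log ((N (p + 2) / N (p + 1)) / (N (p + 1) / N p)) ≤ C₀ * H ^ (p + 1) := by
  obtain ⟨C, hC, h, hh, hMN⟩ := hequiv
  obtain ⟨C₀, hC₀, H, hH, hlog⟩ := hsm
  set C' := max C 1 with hC'def
  set h' := max h 1 with hh'def
  have hC'1 : (1:ℝ) ≤ C' := le_max_right _ _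
  have hh'1 : (1:ℝ) ≤ h' := le_max_right _ _
  have hC'0 : (0:ℝ) < C' := lt_of_lt_of_le one_pos hC'1
  have hh'0 : (0:ℝ) < h' := lt_of_lt_of_le one_pos hh'1
  have hlC : 0 ≤ Real.log C' := Real.log_nonneg hC'1
  have hlh : 0 ≤ Real.log h' := Real.log_nonneg hh'1
  have key : ∀ p, M p ≤ C' * h' ^ p * N p ∧ N p ≤ C' * h' ^ p * M p := by
    intro p
    have hle : C * h ^ p ≤ C' * h' ^ p :=
      mul_le_mul (le_max_left _ _) (pow_le_pow_left₀ hh.le (le_max_left _ _) p)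
        (pow_nonneg hh.le p) hC'0.le
    exact ⟨(hMN p).1.trans (mul_le_mul_of_nonneg_right hle (hNpos p).le),
      (hMN p).2.trans (mul_le_mul_of_nonneg_right hle (hMpos p).le)⟩
  set H' := max H 2 with hH'def
  have hH'2 : (2:ℝ) ≤ H' := le_max_right _ _
  have hH'1 : (1:ℝ) < H' := lt_of_lt_of_le one_lt_two hH'2
  refine ⟨2 * Real.log C' + 2 * Real.log h' + C₀, by linarith, H', hH'1, fun p => ?_⟩
  -- ratio bound
  have hK : (0:ℝ) < C' ^ 4 * h' ^ (4 * p + 4) := by positivity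
  have hRM : (0:ℝ) < (M (p + 2) / M (p + 1)) / (M (p + 1) / M p) := by
    have := hMpos (p+2); have := hMpos (p+1); have := hMpos p; positivity
  have hRN : (0:ℝ) < (N (p + 2) / N (p + 1)) / (N (p + 1) / N p) := by
    have := hNpos (p+2); have := hNpos (p+1); have := hNpos p; positivity
  have hratio : (N (p + 2) / N (p + 1)) / (N (p + 1) / N p) ≤
      (C' ^ 4 * h' ^ (4 * p + 4)) * ((M (p + 2) / M (p + 1)) / (M (p + 1) / M p)) := by
    have A := (key (p+2)).2
    have Cc := (key p).2
    have B := (key (p+1)).1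
    have e1 : (N (p + 2) / N (p + 1)) / (N (p + 1) / N p)
        = N (p + 2) * N p / (N (p + 1) * N (p + 1)) := by
      field_simp [(hNpos (p+1)).ne', (hNpos p).ne']
    have e2 : (C' ^ 4 * h' ^ (4 * p + 4)) * ((M (p + 2) / M (p + 1)) / (M (p + 1) / M p))
        = (C' ^ 4 * h' ^ (4 * p + 4)) * (M (p + 2) * M p) / (M (p + 1) * M (p + 1)) := by
      field_simp [(hMpos (p+1)).ne', (hMpos p).ne']
    rw [e1, e2, div_le_div_iff₀ (by have := hNpos (p+1); positivity)
      (by have := hMpos (p+1); positivity)]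
    have h1 : N (p + 2) * N p ≤ (C' * h' ^ (p + 2) * M (p + 2)) * (C' * h' ^ p * M p) :=
      mul_le_mul A Cc (hNpos p).le (by have := hMpos (p+2); positivity)
    have h2 : M (p + 1) * M (p + 1) ≤ (C' * h' ^ (p + 1) * N (p + 1)) * (C' * h' ^ (p + 1) * N (p + 1)) :=
      mul_le_mul B B (hMpos _).le (by have := hNpos (p+1); positivity)
    calc N (p + 2) * N p * (M (p + 1) * M (p + 1))
        ≤ ((C' * h' ^ (p + 2) * M (p + 2)) * (C' * h' ^ p * M p)) *
          ((C' * h' ^ (p + 1) * N (p + 1)) * (C' * h' ^ (p + 1) * N (p + 1))) := by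
          apply mul_le_mul h1 h2 (by have := hMpos (p+1); positivity)
          have := hMpos (p+2); have := hMpos p; positivity
      _ = C' ^ 4 * h' ^ (4 * p + 4) * (M (p + 2) * M p) * (N (p + 1) * N (p + 1)) := by
          ring
  have hlog1 : Real.log ((N (p + 2) / N (p + 1)) / (N (p + 1) / N p)) ≤
      Real.log ((C' ^ 4 * h' ^ (4 * p + 4)) * ((M (p + 2) / M (p + 1)) / (M (p + 1) / M p))) :=
    Real.log_le_log hRN hratio
  rw [Real.log_mul (by positivity) hRM.ne', Real.log_mul (by positivity) (by positivity),
    Real.log_pow, Real.log_pow] at hlog1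
  have hlogM := hlog p
  -- numeric bounds
  have hHle : H ^ (p + 1) ≤ H' ^ (p + 1) :=
    pow_le_pow_left₀ (by linarith) (le_max_left _ _) _
  have h2pow : (2:ℝ) * (p + 1) ≤ H' ^ (p + 1) := by
    have hn : 2 * (p + 1) ≤ 2 ^ (p + 1) := by
      have := (Nat.lt_two_pow_self (n := p))
      calc 2 * (p + 1) = 2 * (p + 1) := rfl
        _ ≤ 2 * 2 ^ p := by omega
        _ = 2 ^ (p + 1) := by ring
    calc (2:ℝ) * (p + 1) ≤ (2:ℝ) ^ (p + 1) := by exact_mod_cast hn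
      _ ≤ H' ^ (p + 1) := pow_le_pow_left₀ (by norm_num) hH'2 _
  have h2H : (2:ℝ) ≤ H' ^ (p + 1) := by
    calc (2:ℝ) ≤ 2 * (p + 1) := by
          have : (0:ℝ) ≤ (p:ℝ) := Nat.cast_nonneg p
          nlinarith
      _ ≤ H' ^ (p + 1) := h2pow
  have t1 : (4:ℝ) * Real.log C' ≤ 2 * Real.log C' * H' ^ (p + 1) := by nlinarith
  have t2 : ((4 * p + 4 : ℕ) : ℝ) * Real.log h' ≤ 2 * Real.log h' * H' ^ (p + 1) := by
    have e : ((4 * p + 4 : ℕ) : ℝ) = 2 * (2 * (p + 1)) := by push_cast; ring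
    rw [e]
    nlinarith
  have t3 : C₀ * H ^ (p + 1) ≤ C₀ * H' ^ (p + 1) :=
    mul_le_mul_of_nonneg_left hHle hC₀.le
  have expand : (2 * Real.log C' + 2 * Real.log h' + C₀) * H' ^ (p + 1)
      = 2 * Real.log C' * H' ^ (p + 1) + 2 * Real.log h' * H' ^ (p + 1)
        + C₀ * H' ^ (p + 1) := by ring
  linarith [hlog1, hlogM, t1, t2, t3, expand.ge, expand.le]
end

section
/- Let M be a weight sequence satisfying (sm) with constants C₀ > 0 and H > 1, let h > 0, and let φ: (0,∞) → ℂ be continuous with S := sup_{p∈ℕ₀} sup_{x>0} x^p|φ(x)|/(h^pM_p) < ∞. Then for every p ∈ ℕ₀ the p-th moment satisfies ∫₀^∞ x^p |φ(x)| dx ≤ S·h^{p+1}·M_{p+1}·(2 + C₀H^{p+1}). -/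
open Filter MeasureTheory

/-- Moment bound for functions in `C_{M,h}(0,∞)` when the weight sequence `M`
satisfies `(sm)` with constants `C₀ > 0`, `H > 1`. -/
theorem stmt_8 (M : ℕ → ℝ) (hpos : ∀ p, 0 < M p) (h0 : M 0 = 1)
    (hlc : Monotone (fun p => M (p + 1) / M p))
    (hm : Tendsto (fun p => M (p + 1) / M p) atTop atTop)
    (C₀ H : ℝ) (hC₀ : 0 < C₀) (hH : 1 < H)
    (hsm : ∀ p, Real.log ((M (p + 2) / M (p + 1)) / (M (p + 1) / M p)) ≤ C₀ * H ^ (p + 1))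
    (h : ℝ) (hh : 0 < h) (φ : ℝ → ℂ) (hφ : ContinuousOn φ (Set.Ioi 0))
    (S : ℝ) (hS : ∀ p : ℕ, ∀ x : ℝ, 0 < x → x ^ p * ‖φ x‖ ≤ S * h ^ p * M p) :
    ∀ p : ℕ, ∫⁻ x in Set.Ioi (0 : ℝ), ENNReal.ofReal (x ^ p * ‖φ x‖) ≤
      ENNReal.ofReal (S * h ^ (p + 1) * M (p + 1) * (2 + C₀ * H ^ (p + 1))) := by
  intro p
  have hS0 : 0 ≤ S := by
    have h1 := hS 0 1 one_pos
    simp [h0] at h1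
    exact (norm_nonneg (φ 1)).trans h1
  set m : ℕ → ℝ := fun q => M (q + 1) / M q with hm_def
  have hmpos : ∀ q, 0 < m q := fun q => div_pos (hpos _) (hpos _)
  set a : ℝ := h * m p with ha_def
  set b : ℝ := h * m (p + 1) with hb_def
  have ha : 0 < a := mul_pos hh (hmpos p)
  have hab : a ≤ b := by
    have := hlc (Nat.le_succ p)
    exact mul_le_mul_of_nonneg_left this hh.le
  have hb : 0 < b := lt_of_lt_of_le ha hab
  set A : ℝ := S * h ^ (p + 1) * M (p + 1) with hA_def
  have hA0 : 0 ≤ A := by have := hpos (p + 1); positivity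
  -- cover
  have hcover : Set.Ioi (0 : ℝ) = (Set.Ioc 0 a ∪ Set.Ioc a b) ∪ Set.Ioi b := by
    rw [Set.Ioc_union_Ioc_eq_Ioc ha.le hab, Set.Ioc_union_Ioi_eq_Ioi hb.le]
  rw [hcover]
  have key : ∫⁻ x in (Set.Ioc 0 a ∪ Set.Ioc a b) ∪ Set.Ioi b,
      ENNReal.ofReal (x ^ p * ‖φ x‖) ≤
      ((∫⁻ x in Set.Ioc 0 a, ENNReal.ofReal (x ^ p * ‖φ x‖)) +
        ∫⁻ x in Set.Ioc a b, ENNReal.ofReal (x ^ p * ‖φ x‖)) +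
        ∫⁻ x in Set.Ioi b, ENNReal.ofReal (x ^ p * ‖φ x‖) :=
    le_trans (lintegral_union_le _ _ _) (add_le_add_left (lintegral_union_le _ _ _) _)
  refine le_trans key ?_
  -- piece 1
  have I1 : ∫⁻ x in Set.Ioc 0 a, ENNReal.ofReal (x ^ p * ‖φ x‖) ≤ ENNReal.ofReal A := by
    have mono : ∫⁻ x in Set.Ioc 0 a, ENNReal.ofReal (x ^ p * ‖φ x‖) ≤
        ∫⁻ _ in Set.Ioc 0 a, ENNReal.ofReal (S * h ^ p * M p) := by
      refine setLIntegral_mono' measurableSet_Ioc fun x hx => ?_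
      exact ENNReal.ofReal_le_ofReal (hS p x hx.1)
    refine mono.trans ?_
    rw [setLIntegral_const, Real.volume_Ioc]
    rw [← ENNReal.ofReal_mul (by have := hpos p; positivity)]
    apply ENNReal.ofReal_le_ofReal
    have : S * h ^ p * M p * (a - 0) = A := by
      rw [hA_def, ha_def, hm_def]
      field_simp [(hpos p).ne']
      ring
    rw [this]
  -- piece 2
  have I2 : ∫⁻ x in Set.Ioc a b, ENNReal.ofReal (x ^ p * ‖φ x‖) ≤
      ENNReal.ofReal (A * (C₀ * H ^ (p + 1))) := by
    have mono : ∫⁻ x in Set.Ioc a b, ENNReal.ofReal (x ^ p * ‖φ x‖) ≤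
        ∫⁻ x in Set.Ioc a b, ENNReal.ofReal (A * x⁻¹) := by
      refine setLIntegral_mono' measurableSet_Ioc fun x hx => ?_
      have hx0 : 0 < x := lt_of_lt_of_le ha (le_of_lt hx.1)
      apply ENNReal.ofReal_le_ofReal
      have h1 := hS (p + 1) x hx0
      have : x ^ p * ‖φ x‖ = (x ^ (p + 1) * ‖φ x‖) * x⁻¹ := by
        field_simp; ring
      rw [this]
      exact mul_le_mul_of_nonneg_right h1 (by positivity)
    refine mono.trans ?_
    have hint : IntegrableOn (fun x => A * x⁻¹) (Set.Ioc a b) := by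
      apply IntegrableOn.mono_set _ Set.Ioc_subset_Icc_self
      refine ContinuousOn.integrableOn_Icc ?_
      refine continuousOn_const.mul (ContinuousOn.inv₀ continuousOn_id fun x hx => ?_)
      exact ne_of_gt (lt_of_lt_of_le ha hx.1)
    rw [← MeasureTheory.ofReal_integral_eq_lintegral_ofReal hint
      ((ae_restrict_iff' measurableSet_Ioc).2 (Filter.Eventually.of_forall fun x hx => by
        have hx0 : 0 < x := lt_of_lt_of_le ha hx.1.le
        positivity))]
    apply ENNReal.ofReal_le_ofReal
    have hval : ∫ x in Set.Ioc a b, A * x⁻¹ = A * Real.log (b / a) := by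
      rw [MeasureTheory.integral_const_mul]
      congr 1
      rw [← intervalIntegral.integral_of_le hab]
      exact integral_inv (by
        intro hmem
        rcases Set.mem_uIcc.1 hmem with ⟨h1, _⟩ | ⟨h1, _⟩
        · exact absurd h1 (not_le.2 ha)
        · exact absurd h1 (not_le.2 hb))
    rw [hval]
    have hba : b / a = m (p + 1) / m p := by
      rw [ha_def, hb_def]
      field_simp [(hmpos p).ne', hh.ne']
    rw [hba]
    have := hsm p
    exact mul_le_mul_of_nonneg_left this hA0
  -- piece 3
  have I3 : ∫⁻ x in Set.Ioi b, ENNReal.ofReal (x ^ p * ‖φ x‖) ≤ ENNReal.ofReal A := by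
    set C3 : ℝ := S * h ^ (p + 2) * M (p + 2) with hC3_def
    have hC30 : 0 ≤ C3 := by have := hpos (p + 2); positivity
    have mono : ∫⁻ x in Set.Ioi b, ENNReal.ofReal (x ^ p * ‖φ x‖) ≤
        ∫⁻ x in Set.Ioi b, ENNReal.ofReal (C3 * x ^ (-2 : ℝ)) := by
      refine setLIntegral_mono' measurableSet_Ioi fun x hx => ?_
      have hx0 : 0 < x := lt_trans hb hx
      apply ENNReal.ofReal_le_ofReal
      have h1 := hS (p + 2) x hx0
      have hr : x ^ (-2 : ℝ) = (x ^ 2)⁻¹ := by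
        rw [← Real.rpow_natCast x 2, ← Real.rpow_neg hx0.le]
        norm_num
      rw [hr]
      have : x ^ p * ‖φ x‖ = (x ^ (p + 2) * ‖φ x‖) * (x ^ 2)⁻¹ := by
        field_simp; ring
      rw [this]
      exact mul_le_mul_of_nonneg_right h1 (by positivity)
    refine mono.trans ?_
    have hint : IntegrableOn (fun x => C3 * (x ^ (-2 : ℝ))) (Set.Ioi b) :=
      (integrableOn_Ioi_rpow_of_lt (by norm_num) hb).const_mul C3
    rw [← MeasureTheory.ofReal_integral_eq_lintegral_ofReal hint
      ((ae_restrict_iff' measurableSet_Ioi).2 (Filter.Eventually.of_forall fun x hx => by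
        have hx0 : 0 < x := lt_trans hb hx
        positivity))]
    apply ENNReal.ofReal_le_ofReal
    rw [MeasureTheory.integral_const_mul, integral_Ioi_rpow_of_lt (by norm_num) hb]
    have hval : C3 * (-b ^ (-2 + 1 : ℝ) / (-2 + 1)) = C3 * b⁻¹ := by
      rw [show (-2 + 1 : ℝ) = -1 by norm_num, Real.rpow_neg_one]
      ring
    rw [hval]
    have : C3 * b⁻¹ = A := by
      rw [hC3_def, hA_def, hb_def, hm_def]
      have h2 : M (p + 1 + 1) = M (p + 2) := by norm_num
      rw [h2]
      field_simp [(hpos (p + 1)).ne', (hpos (p + 2)).ne', hh.ne']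
      ring
    rw [this]
  calc ((∫⁻ x in Set.Ioc 0 a, ENNReal.ofReal (x ^ p * ‖φ x‖)) +
        ∫⁻ x in Set.Ioc a b, ENNReal.ofReal (x ^ p * ‖φ x‖)) +
        ∫⁻ x in Set.Ioi b, ENNReal.ofReal (x ^ p * ‖φ x‖)
      ≤ (ENNReal.ofReal A + ENNReal.ofReal (A * (C₀ * H ^ (p + 1)))) + ENNReal.ofReal A :=
        add_le_add (add_le_add I1 I2) I3
    _ = ENNReal.ofReal (A * (2 + C₀ * H ^ (p + 1))) := by
        rw [← ENNReal.ofReal_add hA0 (by positivity), ← ENNReal.ofReal_add (by positivity) hA0]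
        congr 1
        ring
end

section
/- Let M be a weight sequence and suppose there exist K₁, K₂ > 0 and a continuous function e: (0,∞) → [0,∞) with e(x) ≥ K₁·h_M(K₂/x) for all x > 0. Then for every p ∈ ℕ₀ the moment μ_p(e) = ∫₀^∞ x^p e(x) dx satisfies μ_p(e) ≥ K₁K₂·(K₂/2)^p·M_{p+1}. -/
open Filter MeasureTheory

/-- Lower bound for the moments of a function dominating `K₁ * h_M (K₂ / x)`. -/
theorem stmt_9 (M : ℕ → ℝ) (hpos : ∀ p, 0 < M p) (h0 : M 0 = 1)
    (hlc : Monotone (fun p => M (p + 1) / M p))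
    (hm : Tendsto (fun p => M (p + 1) / M p) atTop atTop)
    (K₁ K₂ : ℝ) (hK₁ : 0 < K₁) (hK₂ : 0 < K₂)
    (e : ℝ → ℝ) (he : ContinuousOn e (Set.Ioi 0)) (henn : ∀ x, 0 < x → 0 ≤ e x)
    (hlow : ∀ x : ℝ, 0 < x → K₁ * (⨅ q : ℕ, M q * (K₂ / x) ^ q) ≤ e x) :
    ∀ p : ℕ, ENNReal.ofReal (K₁ * K₂ * (K₂ / 2) ^ p * M (p + 1)) ≤
      ∫⁻ x in Set.Ioi (0 : ℝ), ENNReal.ofReal (x ^ p * e x) := by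
  intro p
  have hMp := hpos p
  have hMp1 := hpos (p + 1)
  set t : ℝ := M p / M (p + 1) with ht_def
  have ht : 0 < t := div_pos hMp hMp1
  set s : ℝ := K₂ / t with hs_def
  have hs : 0 < s := div_pos hK₂ ht
  have hts : t * s = K₂ := by rw [hs_def]; field_simp
  -- key inequality: the sequence q ↦ M q * t ^ q is minimized at q = p + 1
  have key : ∀ q, M (p + 1) * t ^ (p + 1) ≤ M q * t ^ q := by
    have hstep_le : ∀ q, q ≤ p → M (q + 1) * t ^ (q + 1) ≤ M q * t ^ q := by
      intro q hq
      have h1 : M (q + 1) / M q ≤ M (p + 1) / M p := hlc hq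
      have hle1 : M (q + 1) / M q * t ≤ 1 := by
        calc M (q + 1) / M q * t ≤ M (p + 1) / M p * t :=
              mul_le_mul_of_nonneg_right h1 ht.le
          _ = 1 := by rw [ht_def]; field_simp
      calc M (q + 1) * t ^ (q + 1) = (M q * t ^ q) * (M (q + 1) / M q * t) := by
            field_simp [(hpos q).ne']; ring
        _ ≤ (M q * t ^ q) * 1 :=
            mul_le_mul_of_nonneg_left hle1 (mul_nonneg (hpos q).le (by positivity))
        _ = M q * t ^ q := mul_one _
    have hstep_ge : ∀ q, p + 1 ≤ q → M q * t ^ q ≤ M (q + 1) * t ^ (q + 1) := by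
      intro q hq
      have hq' : p ≤ q := le_trans (Nat.le_succ p) hq
      have h1 : M (p + 1) / M p ≤ M (q + 1) / M q := hlc hq'
      have hge1 : (1 : ℝ) ≤ M (q + 1) / M q * t := by
        calc (1 : ℝ) = M (p + 1) / M p * t := by rw [ht_def]; field_simp
          _ ≤ M (q + 1) / M q * t := mul_le_mul_of_nonneg_right h1 ht.le
      calc M q * t ^ q = (M q * t ^ q) * 1 := (mul_one _).symm
        _ ≤ (M q * t ^ q) * (M (q + 1) / M q * t) :=
            mul_le_mul_of_nonneg_left hge1 (mul_nonneg (hpos q).le (by positivity))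
        _ = M (q + 1) * t ^ (q + 1) := by field_simp [(hpos q).ne']; ring
    intro q
    rcases le_or_gt q (p + 1) with h | h
    · have hdown : ∀ k q, q + k = p + 1 → M (p + 1) * t ^ (p + 1) ≤ M q * t ^ q := by
        intro k
        induction k with
        | zero =>
          intro q hq
          simp only [Nat.add_zero] at hq
          subst hq; exact le_refl _
        | succ k ih =>
          intro q hq
          have hq1 : (q + 1) + k = p + 1 := by omega
          have hqp : q ≤ p := by omega
          exact le_trans (ih (q + 1) hq1) (hstep_le q hqp)
      exact hdown (p + 1 - q) q (by omega)
    · have hup : ∀ q, p + 1 ≤ q → M (p + 1) * t ^ (p + 1) ≤ M q * t ^ q := by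
        intro q hq
        induction q, hq using Nat.le_induction with
        | base => exact le_refl _
        | succ n hn ih => exact le_trans ih (hstep_ge n hn)
      exact hup q h.le
  set c : ℝ := K₁ * (M (p + 1) * t ^ (p + 1)) with hc_def
  have hc : 0 < c := by positivity
  -- pointwise bound on (0, s]
  have hpt : ∀ x ∈ Set.Ioc (0 : ℝ) s, c * x ^ p ≤ x ^ p * e x := by
    intro x hx
    have hx0 : 0 < x := hx.1
    have hxs : x ≤ s := hx.2
    have hK2x : t ≤ K₂ / x := by
      rw [le_div_iff₀ hx0]
      calc t * x ≤ t * s := by nlinarith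
        _ = K₂ := hts
    have hinf : M (p + 1) * t ^ (p + 1) ≤ ⨅ q : ℕ, M q * (K₂ / x) ^ q := by
      apply le_ciInf
      intro q
      calc M (p + 1) * t ^ (p + 1) ≤ M q * t ^ q := key q
        _ ≤ M q * (K₂ / x) ^ q :=
            mul_le_mul_of_nonneg_left (pow_le_pow_left₀ ht.le hK2x q) (hpos q).le
    have hce : c ≤ e x := by
      calc c = K₁ * (M (p + 1) * t ^ (p + 1)) := hc_def
        _ ≤ K₁ * (⨅ q : ℕ, M q * (K₂ / x) ^ q) :=
            mul_le_mul_of_nonneg_left hinf hK₁.le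
        _ ≤ e x := hlow x hx0
    calc c * x ^ p ≤ e x * x ^ p :=
          mul_le_mul_of_nonneg_right hce (by positivity)
      _ = x ^ p * e x := mul_comm _ _
  -- integral computations
  have hcont : Continuous fun x : ℝ => c * x ^ p := by continuity
  have hint : IntegrableOn (fun x : ℝ => c * x ^ p) (Set.Ioc 0 s) :=
    hcont.integrableOn_Ioc
  have hnn : 0 ≤ᵐ[volume.restrict (Set.Ioc (0 : ℝ) s)] fun x : ℝ => c * x ^ p := by
    rw [Filter.EventuallyLE, ae_restrict_iff' measurableSet_Ioc]
    filter_upwards with x hx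
    have hx0 : 0 < x := hx.1
    positivity
  have hval : ∫⁻ x in Set.Ioc (0 : ℝ) s, ENNReal.ofReal (c * x ^ p) =
      ENNReal.ofReal (c * (s ^ (p + 1) / (p + 1))) := by
    rw [← ofReal_integral_eq_lintegral_ofReal hint hnn]
    congr 1
    rw [← intervalIntegral.integral_of_le hs.le]
    rw [intervalIntegral.integral_const_mul, integral_pow]
    norm_num
  have h2p : (p : ℝ) + 1 ≤ 2 ^ p := by
    have := Nat.lt_two_pow_self (n := p)
    exact_mod_cast this
  have hfin : K₁ * K₂ * (K₂ / 2) ^ p * M (p + 1) ≤ c * (s ^ (p + 1) / (p + 1)) := by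
    have hsp : t ^ (p + 1) * s ^ (p + 1) = K₂ ^ (p + 1) := by rw [← mul_pow, hts]
    have hL : K₁ * K₂ * (K₂ / 2) ^ p * M (p + 1)
        = K₁ * M (p + 1) * K₂ ^ (p + 1) / 2 ^ p := by
      rw [div_pow, pow_succ]; ring
    have hR : c * (s ^ (p + 1) / (p + 1))
        = K₁ * M (p + 1) * K₂ ^ (p + 1) / ((p : ℝ) + 1) := by
      rw [hc_def, ← hsp]; push_cast; ring
    rw [hL, hR]
    gcongr
  calc ENNReal.ofReal (K₁ * K₂ * (K₂ / 2) ^ p * M (p + 1))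
      ≤ ENNReal.ofReal (c * (s ^ (p + 1) / (p + 1))) := ENNReal.ofReal_le_ofReal hfin
    _ = ∫⁻ x in Set.Ioc (0 : ℝ) s, ENNReal.ofReal (c * x ^ p) := hval.symm
    _ ≤ ∫⁻ x in Set.Ioc (0 : ℝ) s, ENNReal.ofReal (x ^ p * e x) := by
        apply lintegral_mono_ae
        rw [ae_restrict_iff' measurableSet_Ioc]
        filter_upwards with x hx
        exact ENNReal.ofReal_le_ofReal (hpt x hx)
    _ ≤ ∫⁻ x in Set.Ioi (0 : ℝ), ENNReal.ofReal (x ^ p * e x) :=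
        lintegral_mono_set Set.Ioc_subset_Ioi_self
end

section
/- Let M be a weight sequence with quotients m_p, and let e: (0,∞) → [0,∞) be continuous with e(x) ≥ K₁·h_M(K₂/x) for all x > 0, where K₁, K₂ > 0. Then for every p ∈ ℕ₀: ∫₀^∞ x^p e(x) dx ≥ K₁·K₂^{p+1}·M_{p+1}·log(m_{p+1}/m_p). -/
open Filter MeasureTheory

lemma aux_inf (M : ℕ → ℝ) (hpos : ∀ p, 0 < M p)
    (hlc : Monotone (fun p => M (p + 1) / M p)) (p : ℕ) (t : ℝ) (ht : 0 < t)
    (h1 : M (p + 1) / M p * t ≤ 1) (h2 : 1 ≤ M (p + 2) / M (p + 1) * t) :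
    ∀ q : ℕ, M (p + 1) * t ^ (p + 1) ≤ M q * t ^ q := by
  have down : ∀ k, k ≤ p → M (k + 1) * t ^ (k + 1) ≤ M k * t ^ k := by
    intro k hk
    have hq : M (k + 1) / M k ≤ M (p + 1) / M p := hlc hk
    have hqt : M (k + 1) / M k * t ≤ 1 :=
      le_trans (by nlinarith [hpos k, hpos (k+1), hpos p, hpos (p+1)]) h1
    rw [div_mul_eq_mul_div, div_le_one (hpos k)] at hqt
    have := pow_pos ht k
    calc M (k + 1) * t ^ (k + 1) = (M (k + 1) * t) * t ^ k := by ring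
      _ ≤ M k * t ^ k := by nlinarith
  have up : ∀ k, p + 1 ≤ k → M k * t ^ k ≤ M (k + 1) * t ^ (k + 1) := by
    intro k hk
    have hq : M (p + 2) / M (p + 1) ≤ M (k + 1) / M k := hlc hk
    have hqt : 1 ≤ M (k + 1) / M k * t :=
      le_trans h2 (by nlinarith [hpos k, hpos (k+1), hpos (p+1), hpos (p+2)])
    rw [div_mul_eq_mul_div, le_div_iff₀ (hpos k)] at hqt
    have := pow_pos ht k
    calc M k * t ^ k = (1 * M k) * t ^ k := by ring
      _ ≤ (M (k + 1) * t) * t ^ k := by nlinarith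
      _ = M (k + 1) * t ^ (k + 1) := by ring
  intro q
  rcases le_or_gt q (p + 1) with hq | hq
  · have key : ∀ j, ∀ k, k + j = p + 1 → M (p + 1) * t ^ (p + 1) ≤ M k * t ^ k := by
      intro j
      induction j with
      | zero => intro k hk; simp only [Nat.add_zero] at hk; subst hk; exact le_rfl
      | succ n ih =>
        intro k hk
        exact le_trans (ih (k + 1) (by omega)) (down k (by omega))
    exact key (p + 1 - q) q (by omega)
  · have key : ∀ j, M (p + 1) * t ^ (p + 1) ≤ M (p + 1 + j) * t ^ (p + 1 + j) := by
      intro j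
      induction j with
      | zero => exact le_rfl
      | succ n ih =>
        refine le_trans ih ?_
        have := up (p + 1 + n) (by omega)
        rwa [show p + 1 + n + 1 = p + 1 + (n + 1) by omega] at this
    have := key (q - (p + 1))
    rwa [show p + 1 + (q - (p + 1)) = q by omega] at this

/-- Logarithmic lower bound for the moments of a function dominating
`K₁ * h_M (K₂ / x)`. -/
theorem stmt_10 (M : ℕ → ℝ) (hpos : ∀ p, 0 < M p) (h0 : M 0 = 1)
    (hlc : Monotone (fun p => M (p + 1) / M p))
    (hm : Tendsto (fun p => M (p + 1) / M p) atTop atTop)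
    (K₁ K₂ : ℝ) (hK₁ : 0 < K₁) (hK₂ : 0 < K₂)
    (e : ℝ → ℝ) (he : ContinuousOn e (Set.Ioi 0)) (henn : ∀ x, 0 < x → 0 ≤ e x)
    (hlow : ∀ x : ℝ, 0 < x → K₁ * (⨅ q : ℕ, M q * (K₂ / x) ^ q) ≤ e x) :
    ∀ p : ℕ, ENNReal.ofReal (K₁ * K₂ ^ (p + 1) * M (p + 1) *
        Real.log ((M (p + 2) / M (p + 1)) / (M (p + 1) / M p))) ≤
      ∫⁻ x in Set.Ioi (0 : ℝ), ENNReal.ofReal (x ^ p * e x) := by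
  intro p
  set c := M (p + 1) / M p with hc_def
  set d := M (p + 2) / M (p + 1) with hd_def
  have hc : 0 < c := div_pos (hpos _) (hpos _)
  have hd : 0 < d := div_pos (hpos _) (hpos _)
  have hcd : c ≤ d := hlc (Nat.le_succ p)
  set a := K₂ * c with ha_def
  set b := K₂ * d with hb_def
  have ha : 0 < a := mul_pos hK₂ hc
  have hab : a ≤ b := by
    have := mul_le_mul_of_nonneg_left hcd hK₂.le
    simpa [ha_def, hb_def] using this
  set C := K₁ * K₂ ^ (p + 1) * M (p + 1) with hC_def
  have hC : 0 < C := mul_pos (mul_pos hK₁ (pow_pos hK₂ _)) (hpos _)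
  -- pointwise bound on the interval
  have key : ∀ x ∈ Set.Ioc a b, C / x ≤ x ^ p * e x := by
    intro x hx
    have hx0 : 0 < x := lt_trans ha hx.1
    set t := K₂ / x with ht_def
    have ht : 0 < t := div_pos hK₂ hx0
    have h1 : c * t ≤ 1 := by
      rw [ht_def, mul_div_assoc', div_le_one hx0]
      nlinarith [hx.1]
    have h2 : 1 ≤ d * t := by
      rw [ht_def, mul_div_assoc', le_div_iff₀ hx0]
      nlinarith [hx.2]
    have hinf : M (p + 1) * t ^ (p + 1) ≤ ⨅ q : ℕ, M q * t ^ q :=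
      le_ciInf (aux_inf M hpos hlc p t ht h1 h2)
    have hE : K₁ * (M (p + 1) * t ^ (p + 1)) ≤ e x :=
      le_trans (mul_le_mul_of_nonneg_left hinf hK₁.le) (hlow x hx0)
    have heq : C / x = x ^ p * (K₁ * (M (p + 1) * t ^ (p + 1))) := by
      rw [ht_def, div_pow, hC_def]
      field_simp
      ring
    rw [heq]
    exact mul_le_mul_of_nonneg_left hE (pow_nonneg hx0.le p)
  -- compute the integral of C / x over the interval
  have hmeas : MeasurableSet (Set.Ioc a b) := measurableSet_Ioc
  have hint : IntegrableOn (fun x : ℝ => C / x) (Set.Ioc a b) := by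
    refine ((continuousOn_const.div continuousOn_id ?_).integrableOn_Icc).mono_set
      Set.Ioc_subset_Icc_self
    intro x hx
    exact ne_of_gt (lt_of_lt_of_le ha hx.1)
  have hcompute : ∫⁻ x in Set.Ioc a b, ENNReal.ofReal (C / x)
      = ENNReal.ofReal (C * Real.log (d / c)) := by
    rw [← ofReal_integral_eq_lintegral_ofReal hint
      ((ae_restrict_iff' hmeas).2 (ae_of_all _ fun x hx =>
        div_nonneg hC.le (lt_trans ha hx.1).le))]
    congr 1
    have h0ni : (0 : ℝ) ∉ Set.uIcc a b := by
      rw [Set.uIcc_of_le hab]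
      intro h
      exact absurd h.1 (not_le.2 ha)
    calc ∫ x in Set.Ioc a b, C / x
        = ∫ x in a..b, C * x⁻¹ := by
          rw [intervalIntegral.integral_of_le hab]
          simp_rw [div_eq_mul_inv]
      _ = C * Real.log (b / a) := by
          rw [intervalIntegral.integral_const_mul, integral_inv h0ni]
      _ = C * Real.log (d / c) := by
          rw [ha_def, hb_def, mul_div_mul_left d c hK₂.ne']
  calc ENNReal.ofReal (C * Real.log (d / c))
      = ∫⁻ x in Set.Ioc a b, ENNReal.ofReal (C / x) := hcompute.symm
    _ ≤ ∫⁻ x in Set.Ioc a b, ENNReal.ofReal (x ^ p * e x) :=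
        lintegral_mono_ae ((ae_restrict_iff' hmeas).2 (ae_of_all _ fun x hx =>
          ENNReal.ofReal_le_ofReal (key x hx)))
    _ ≤ ∫⁻ x in Set.Ioi (0 : ℝ), ENNReal.ofReal (x ^ p * e x) :=
        lintegral_mono_set (fun x hx => lt_trans ha hx.1)
end

section
/- Let M be a weight sequence with γ(M) > 0 such that for some sector S bisected by the positive real axis there exists an optimal {M}-flat function. If every φ ∈ C_{{M}}(0,∞) has moment sequence (μ_p(φ))_p belonging to Λ_{{M}} (i.e., |μ_p(φ)| ≤ C·h^p·M_p for some C, h > 0), then M is derivation closed: there exist C₀ > 0 and H ≥ 1 with M_{p+1} ≤ C₀H^{p+1}M_p for all p. -/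
open Filter MeasureTheory

private lemma claimA (M : ℕ → ℝ) (hpos : ∀ p, 0 < M p)
    (hlc : Monotone (fun p => M (p + 1) / M p)) (p : ℕ) :
    ∀ k, M p * (M (p + 1) / M p) ^ k ≤ M (p + k) := by
  intro k
  induction k with
  | zero => simp
  | succ k ih =>
    have hm0 : 0 < M (p + 1) / M p := div_pos (hpos _) (hpos _)
    have hle : M (p + 1) / M p ≤ M (p + k + 1) / M (p + k) := hlc (Nat.le_add_right p k)
    calc M p * (M (p + 1) / M p) ^ (k + 1)
        = (M p * (M (p + 1) / M p) ^ k) * (M (p + 1) / M p) := by ring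
      _ ≤ M (p + k) * (M (p + 1) / M p) := mul_le_mul_of_nonneg_right ih hm0.le
      _ ≤ M (p + k) * (M (p + k + 1) / M (p + k)) :=
          mul_le_mul_of_nonneg_left hle (hpos _).le
      _ = M (p + k + 1) := by
          rw [mul_comm, div_mul_cancel₀ _ (hpos (p + k)).ne']

private lemma claimB (M : ℕ → ℝ) (hpos : ∀ p, 0 < M p)
    (hlc : Monotone (fun p => M (p + 1) / M p)) (p : ℕ) :
    ∀ k, k ≤ p → M p ≤ M (p - k) * (M (p + 1) / M p) ^ k := by
  intro k
  induction k with
  | zero => simp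
  | succ k ih =>
    intro hk
    have hk' : k ≤ p := Nat.le_of_succ_le hk
    have ihk := ih hk'
    set j := p - (k + 1) with hj
    have hjk : p - k = j + 1 := by omega
    have hjp : j ≤ p := by omega
    have hle : M (j + 1) / M j ≤ M (p + 1) / M p := hlc hjp
    have h1 : M (j + 1) ≤ M j * (M (p + 1) / M p) := by
      have := mul_le_mul_of_nonneg_left hle (hpos j).le
      calc M (j + 1) = M j * (M (j + 1) / M j) := by
            rw [mul_comm, div_mul_cancel₀ _ (hpos j).ne']
        _ ≤ M j * (M (p + 1) / M p) := this
    calc M p ≤ M (p - k) * (M (p + 1) / M p) ^ k := ihk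
      _ = M (j + 1) * (M (p + 1) / M p) ^ k := by rw [hjk]
      _ ≤ (M j * (M (p + 1) / M p)) * (M (p + 1) / M p) ^ k := by
          have hm0 : (0:ℝ) ≤ M (p + 1) / M p := (div_pos (hpos _) (hpos _)).le
          exact mul_le_mul_of_nonneg_right h1 (pow_nonneg hm0 k)
      _ = M j * (M (p + 1) / M p) ^ (k + 1) := by ring

/-- key inequality: `M p * m^q ≤ M q * m^p` where `m = M(p+1)/M p`. -/
private lemma keyIneq (M : ℕ → ℝ) (hpos : ∀ p, 0 < M p)
    (hlc : Monotone (fun p => M (p + 1) / M p)) (p q : ℕ) :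
    M p * (M (p + 1) / M p) ^ q ≤ M q * (M (p + 1) / M p) ^ p := by
  set m := M (p + 1) / M p with hm
  have hm0 : 0 < m := div_pos (hpos _) (hpos _)
  rcases le_total p q with hpq | hqp
  · have hA := claimA M hpos hlc p (q - p)
    have hq : p + (q - p) = q := by omega
    rw [hq] at hA
    calc M p * m ^ q = (M p * m ^ (q - p)) * m ^ p := by
          rw [mul_assoc, ← pow_add]; congr 2; omega
      _ ≤ M q * m ^ p := mul_le_mul_of_nonneg_right hA (by positivity)
  · have hB := claimB M hpos hlc p (p - q) (by omega)
    have hq : p - (p - q) = q := by omega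
    rw [hq] at hB
    calc M p * m ^ q ≤ (M q * m ^ (p - q)) * m ^ q :=
          mul_le_mul_of_nonneg_right hB (by positivity)
      _ = M q * m ^ p := by rw [mul_assoc, ← pow_add]; congr 2; omega

/-- If `M` is a weight sequence with `γ(M) > 0` admitting an optimal `{M}`-flat
function (expressed via its kernel `e(x) = G(1/x)` on `(0,∞)`), and every
`φ ∈ C_{M}(0,∞)` has moment sequence in `Λ_{M}`, then `M` is derivation closed. -/
theorem stmt_11 (M : ℕ → ℝ) (hpos : ∀ p, 0 < M p) (h0 : M 0 = 1)
    (hlc : Monotone (fun p => M (p + 1) / M p))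
    (hm : Tendsto (fun p => M (p + 1) / M p) atTop atTop)
    (hγ : ∃ μ > (0 : ℝ), ∃ a > (0 : ℝ), ∀ p q : ℕ, p ≤ q →
      (M (p + 1) / M p) / ((p : ℝ) + 1) ^ μ ≤ a * ((M (q + 1) / M q) / ((q : ℝ) + 1) ^ μ))
    (hflat : ∃ e : ℝ → ℝ, ContinuousOn e (Set.Ioi 0) ∧ (∀ x, 0 < x → 0 ≤ e x) ∧
      ∃ K₁ > (0 : ℝ), ∃ K₂ > (0 : ℝ), ∃ K₃ > (0 : ℝ), ∃ K₄ > (0 : ℝ), ∀ x : ℝ, 0 < x →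
        K₁ * (⨅ q : ℕ, M q * (K₂ / x) ^ q) ≤ e x ∧
        e x ≤ K₃ * (⨅ q : ℕ, M q * (K₄ / x) ^ q))
    (hmom : ∀ φ : ℝ → ℂ, ContinuousOn φ (Set.Ioi 0) →
      (∃ h > (0 : ℝ), ∃ S : ℝ, ∀ p : ℕ, ∀ x : ℝ, 0 < x → x ^ p * ‖φ x‖ ≤ S * h ^ p * M p) →
      ∃ C > (0 : ℝ), ∃ h > (0 : ℝ), ∀ p : ℕ,
        ‖∫ x in Set.Ioi (0 : ℝ), (x : ℂ) ^ p * φ x‖ ≤ C * h ^ p * M p) :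
    ∃ C₀ > (0 : ℝ), ∃ H : ℝ, 1 ≤ H ∧ ∀ p, M (p + 1) ≤ C₀ * H ^ (p + 1) * M p := by
  obtain ⟨e, ce, enn, K₁, hK₁, K₂, hK₂, K₃, hK₃, K₄, hK₄, hbound⟩ := hflat
  -- bddBelow of the ranges
  have hbdd : ∀ t : ℝ, 0 ≤ t → BddBelow (Set.range fun q : ℕ => M q * t ^ q) := by
    intro t ht
    refine ⟨0, fun y hy => ?_⟩
    obtain ⟨q, rfl⟩ := hy
    have := (hpos q).le
    positivity
  -- upper bound : e x ≤ K₃ * (M q * (K₄/x)^q) for each q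
  have heub : ∀ x : ℝ, 0 < x → ∀ q : ℕ, e x ≤ K₃ * (M q * (K₄ / x) ^ q) := by
    intro x hx q
    refine le_trans (hbound x hx).2 ?_
    exact mul_le_mul_of_nonneg_left
      (ciInf_le (hbdd _ (by positivity)) q) hK₃.le
  -- e is in the class C_{M}
  have hclass : ∃ h > (0 : ℝ), ∃ S : ℝ, ∀ p : ℕ, ∀ x : ℝ, 0 < x →
      x ^ p * ‖((e x : ℝ) : ℂ)‖ ≤ S * h ^ p * M p := by
    refine ⟨K₄, hK₄, K₃, fun p x hx => ?_⟩
    have h1 : ‖((e x : ℝ) : ℂ)‖ = e x := by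
      rw [Complex.norm_real, Real.norm_eq_abs, abs_of_nonneg (enn x hx)]
    rw [h1]
    calc x ^ p * e x ≤ x ^ p * (K₃ * (M p * (K₄ / x) ^ p)) :=
          mul_le_mul_of_nonneg_left (heub x hx p) (by positivity)
      _ = K₃ * K₄ ^ p * M p := by
          rw [div_pow]
          field_simp
  obtain ⟨C, hC, h, hh, hCb⟩ := hmom (fun x => ((e x : ℝ) : ℂ))
    (Complex.continuous_ofReal.comp_continuousOn ce) hclass
  -- Main construction
  set H : ℝ := max 1 (2 / K₂) * max 1 h with hH
  have hH1 : 1 ≤ H := by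
    have h1 : (1:ℝ) ≤ max 1 (2 / K₂) := le_max_left _ _
    have h2 : (1:ℝ) ≤ max 1 h := le_max_left _ _
    nlinarith
  refine ⟨C / K₁, div_pos hC hK₁, H, hH1, fun p => ?_⟩
  set m := M (p + 1) / M p with hmdef
  have hm0 : 0 < m := div_pos (hpos _) (hpos _)
  set a := K₂ * m / 2 with hadef
  set b := K₂ * m with hbdef
  have ha0 : 0 < a := by positivity
  have hab : a ≤ b := by rw [hadef, hbdef]; nlinarith
  have heK3 : ∀ x : ℝ, 0 < x → e x ≤ K₃ := fun x hx => by
    have := heub x hx 0; simpa [h0] using this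
  -- rewrite the complex integral as a real one
  have hint_eq : (∫ x in Set.Ioi (0:ℝ), (x : ℂ) ^ p * ((e x : ℝ) : ℂ))
      = ((∫ x in Set.Ioi (0:ℝ), x ^ p * e x : ℝ) : ℂ) := by
    rw [show (fun x : ℝ => (x : ℂ) ^ p * ((e x : ℝ) : ℂ))
        = fun x : ℝ => ((x ^ p * e x : ℝ) : ℂ) from funext fun x => by push_cast; ring]
    exact integral_ofReal
  have hub : (∫ x in Set.Ioi (0:ℝ), x ^ p * e x) ≤ C * h ^ p * M p := by
    calc (∫ x in Set.Ioi (0:ℝ), x ^ p * e x) ≤ |∫ x in Set.Ioi (0:ℝ), x ^ p * e x| :=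
          le_abs_self _
      _ = ‖((∫ x in Set.Ioi (0:ℝ), x ^ p * e x : ℝ) : ℂ)‖ := by
          rw [Complex.norm_real, Real.norm_eq_abs]
      _ = ‖∫ x in Set.Ioi (0:ℝ), (x : ℂ) ^ p * ((e x : ℝ) : ℂ)‖ := by rw [hint_eq]
      _ ≤ C * h ^ p * M p := hCb p
  -- integrability of x^p * e x on (0, ∞)
  have hfc : ContinuousOn (fun x : ℝ => x ^ p * e x) (Set.Ioi 0) :=
    ((continuous_pow p).continuousOn).mul ce
  have hfint1 : IntegrableOn (fun x : ℝ => x ^ p * e x) (Set.Ioc (0:ℝ) 1) := by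
    refine Integrable.mono' (g := fun _ => K₃)
      (integrableOn_const measure_Ioc_lt_top.ne)
      ((hfc.mono (Set.Ioc_subset_Ioi_self)).aestronglyMeasurable measurableSet_Ioc)
      ((ae_restrict_iff' measurableSet_Ioc).mpr (ae_of_all _ fun x hx => ?_))
    have hx0 : 0 < x := hx.1
    rw [Real.norm_eq_abs, abs_of_nonneg (mul_nonneg (pow_nonneg hx0.le p) (enn x hx0))]
    calc x ^ p * e x ≤ 1 * K₃ :=
          mul_le_mul (pow_le_one₀ hx0.le hx.2) (heK3 x hx0) (enn x hx0) zero_le_one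
      _ = K₃ := one_mul _
  have hfint2 : IntegrableOn (fun x : ℝ => x ^ p * e x) (Set.Ioi (1:ℝ)) := by
    refine Integrable.mono'
      (g := fun x => (K₃ * (M (p + 2) * K₄ ^ (p + 2))) * x ^ (-2 : ℝ))
      ((integrableOn_Ioi_rpow_of_lt (by norm_num) one_pos).const_mul _)
      ((hfc.mono (fun x (hx : x ∈ Set.Ioi (1:ℝ)) => lt_trans (one_pos : (0:ℝ) < 1) hx)).aestronglyMeasurable measurableSet_Ioi)
      ((ae_restrict_iff' measurableSet_Ioi).mpr (ae_of_all _ fun x hx => ?_))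
    have hx0 : (0:ℝ) < x := lt_trans one_pos hx
    have hr : x ^ (-2 : ℝ) = (x ^ (2:ℕ))⁻¹ := by
      rw [show ((-2:ℝ)) = -((2:ℕ) : ℝ) by norm_num, Real.rpow_neg hx0.le, Real.rpow_natCast]
    rw [Real.norm_eq_abs, abs_of_nonneg (mul_nonneg (pow_nonneg hx0.le p) (enn x hx0))]
    show x ^ p * e x ≤ K₃ * (M (p + 2) * K₄ ^ (p + 2)) * x ^ (-2 : ℝ)
    rw [hr]
    calc x ^ p * e x ≤ x ^ p * (K₃ * (M (p + 2) * (K₄ / x) ^ (p + 2))) :=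
          mul_le_mul_of_nonneg_left (heub x hx0 (p + 2)) (pow_nonneg hx0.le p)
      _ = (K₃ * (M (p + 2) * K₄ ^ (p + 2))) * (x ^ (2:ℕ))⁻¹ := by
          rw [div_pow]
          field_simp
          ring
  have hfint : IntegrableOn (fun x : ℝ => x ^ p * e x) (Set.Ioi (0:ℝ)) := by
    rw [← Set.Ioc_union_Ioi_eq_Ioi (zero_le_one : (0:ℝ) ≤ 1)]
    exact hfint1.union hfint2
  -- constant lower bound on [a, b]
  have hconst : ∀ x ∈ Set.Icc a b,
      (K₁ * (M p * (1 / m) ^ p)) * a ^ p ≤ x ^ p * e x := by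
    intro x hx
    have hx0 : 0 < x := lt_of_lt_of_le ha0 hx.1
    have h1m : 1 / m ≤ K₂ / x := by
      rw [div_le_div_iff₀ hm0 hx0]
      calc 1 * x = x := one_mul x
        _ ≤ b := hx.2
        _ = K₂ * m := rfl
    have elower : ∀ q : ℕ, M p * (1 / m) ^ p ≤ M q * (K₂ / x) ^ q := by
      intro q
      have h1 : M p * (1 / m) ^ p ≤ M q * (1 / m) ^ q := by
        have hkey := keyIneq M hpos hlc p q
        rw [one_div, inv_pow, inv_pow, ← div_eq_mul_inv, ← div_eq_mul_inv,
          div_le_div_iff₀ (pow_pos hm0 p) (pow_pos hm0 q)]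
        calc M p * m ^ q ≤ M q * m ^ p := hkey
          _ = M q * m ^ p := rfl
      refine h1.trans (mul_le_mul_of_nonneg_left ?_ (hpos q).le)
      exact pow_le_pow_left₀ (by positivity) h1m q
    have hex : K₁ * (M p * (1 / m) ^ p) ≤ e x := by
      refine le_trans ?_ (hbound x hx0).1
      exact mul_le_mul_of_nonneg_left (le_ciInf elower) hK₁.le
    calc (K₁ * (M p * (1 / m) ^ p)) * a ^ p = a ^ p * (K₁ * (M p * (1 / m) ^ p)) := by ring
      _ ≤ x ^ p * e x :=
          mul_le_mul (pow_le_pow_left₀ ha0.le hx.1 p) hex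
            (mul_nonneg hK₁.le (mul_nonneg (hpos p).le (by positivity)))
            (pow_nonneg hx0.le p)
  have hIccsub : Set.Icc a b ⊆ Set.Ioi (0:ℝ) := fun x hx => lt_of_lt_of_le ha0 hx.1
  have hlow1 : (K₁ * (M p * (1 / m) ^ p)) * a ^ p * (volume (Set.Icc a b)).toReal
      ≤ ∫ x in Set.Icc a b, x ^ p * e x :=
    by have := setIntegral_ge_of_const_le measurableSet_Icc measure_Icc_lt_top.ne hconst
         (hfint.mono_set hIccsub)
       rwa [smul_eq_mul, mul_comm, measureReal_def] at this
  have hvol : (volume (Set.Icc a b)).toReal = b - a := by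
    rw [Real.volume_Icc, ENNReal.toReal_ofReal (sub_nonneg.mpr hab)]
  have hmono : (∫ x in Set.Icc a b, x ^ p * e x) ≤ ∫ x in Set.Ioi (0:ℝ), x ^ p * e x := by
    refine setIntegral_mono_set hfint ?_ (HasSubset.Subset.eventuallyLE hIccsub)
    exact (ae_restrict_iff' measurableSet_Ioi).mpr
      (ae_of_all _ fun x hx => mul_nonneg (pow_nonneg (le_of_lt hx) p) (enn x hx))
  -- combine
  have hchain : (K₁ * (M p * (1 / m) ^ p)) * a ^ p * (b - a) ≤ C * h ^ p * M p := by
    rw [← hvol]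
    exact le_trans hlow1 (le_trans hmono hub)
  have hba : b - a = K₂ * m / 2 := by rw [hadef, hbdef]; ring
  have hap : a ^ p * (1 / m) ^ p = (K₂ / 2) ^ p := by
    rw [← mul_pow, hadef]
    congr 1
    field_simp
    rw [hbdef]
    ring
  have hchain2 : (K₁ * ((K₂ / 2) ^ (p + 1) * m)) * M p ≤ (C * h ^ p) * M p := by
    calc (K₁ * ((K₂ / 2) ^ (p + 1) * m)) * M p
        = (K₁ * (M p * (1 / m) ^ p)) * a ^ p * (K₂ * m / 2) := by
          rw [show (K₁ * (M p * (1 / m) ^ p)) * a ^ p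
              = K₁ * M p * (a ^ p * (1 / m) ^ p) by ring, hap, pow_succ]
          ring
      _ = (K₁ * (M p * (1 / m) ^ p)) * a ^ p * (b - a) := by rw [hba]
      _ ≤ C * h ^ p * M p := hchain
      _ = (C * h ^ p) * M p := rfl
  have hchain3 : K₁ * ((K₂ / 2) ^ (p + 1) * m) ≤ C * h ^ p :=
    (mul_le_mul_iff_of_pos_right (hpos p)).mp hchain2
  have hmC : m ≤ C / K₁ * ((2 / K₂) ^ (p + 1) * h ^ p) := by
    have hid : (K₁ * ((K₂ / 2) ^ (p + 1) * m)) * ((2 / K₂) ^ (p + 1) / K₁) = m := by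
      rw [div_pow, div_pow]
      field_simp
    calc m = (K₁ * ((K₂ / 2) ^ (p + 1) * m)) * ((2 / K₂) ^ (p + 1) / K₁) := hid.symm
      _ ≤ (C * h ^ p) * ((2 / K₂) ^ (p + 1) / K₁) :=
          mul_le_mul_of_nonneg_right hchain3 (by positivity)
      _ = C / K₁ * ((2 / K₂) ^ (p + 1) * h ^ p) := by ring
  have hHp : (2 / K₂) ^ (p + 1) * h ^ p ≤ H ^ (p + 1) := by
    have e1 : (2 / K₂) ^ (p + 1) ≤ (max 1 (2 / K₂)) ^ (p + 1) :=
      pow_le_pow_left₀ (by positivity) (le_max_right _ _) _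
    have e2 : h ^ p ≤ (max 1 h) ^ (p + 1) :=
      le_trans (pow_le_pow_left₀ hh.le (le_max_right _ _) p)
        (pow_le_pow_right₀ (le_max_left _ _) (Nat.le_succ p))
    calc (2 / K₂) ^ (p + 1) * h ^ p ≤ (max 1 (2 / K₂)) ^ (p + 1) * (max 1 h) ^ (p + 1) :=
          mul_le_mul e1 e2 (pow_nonneg hh.le p) (by positivity)
      _ = H ^ (p + 1) := (mul_pow _ _ _).symm
  have hmfin : m ≤ C / K₁ * H ^ (p + 1) :=
    le_trans hmC (mul_le_mul_of_nonneg_left hHp (by positivity))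
  have hMp1 : M (p + 1) = m * M p := (div_mul_cancel₀ _ (hpos p).ne').symm
  rw [hMp1]
  exact mul_le_mul_of_nonneg_right hmfin (hpos p).le
end

section
/- Let M be a weight sequence with γ(M) > 0 admitting an optimal {M}-flat function on a sector bisected by the positive real axis. If every φ ∈ C_{{M}}(0,∞) has (μ_p(φ))_p ∈ Λ_{{M_{+1}}} (i.e., |μ_p(φ)| ≤ C·h^p·M_{p+1} for some C, h > 0), then M satisfies (sm): log(m_{p+1}/m_p) ≤ C₀H^{p+1} for some C₀ > 0, H > 1 and all p. -/
open Filter MeasureTheory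

/-- If `f (k+1) ≤ f k` along a range, the value decreases. -/
lemma stmt12_chain_down (f : ℕ → ℝ) (q n : ℕ) (hqn : q ≤ n)
    (h : ∀ k, q ≤ k → k < n → f (k + 1) ≤ f k) : f n ≤ f q := by
  revert h
  induction n, hqn using Nat.le_induction with
  | base => exact fun _ => le_rfl
  | succ n hn ih =>
      intro h
      exact le_trans (h n hn (Nat.lt_succ_self n))
        (ih fun k hk hk' => h k hk (Nat.lt_succ_of_lt hk'))

/-- If `f k ≤ f (k+1)` from `q` on, the value increases. -/
lemma stmt12_chain_up (f : ℕ → ℝ) (q n : ℕ) (hqn : q ≤ n)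
    (h : ∀ k, q ≤ k → f k ≤ f (k + 1)) : f q ≤ f n := by
  induction n, hqn using Nat.le_induction with
  | base => exact le_rfl
  | succ n hn ih => exact le_trans ih (h n hn)

/-- If `M` is a weight sequence with `γ(M) > 0` admitting an optimal `{M}`-flat
function, and every `φ ∈ C_{M}(0,∞)` has moment sequence in `Λ_{M_{+1}}`,
then `M` satisfies `(sm)`. -/
theorem stmt_12 (M : ℕ → ℝ) (hpos : ∀ p, 0 < M p) (h0 : M 0 = 1)
    (hlc : Monotone (fun p => M (p + 1) / M p))
    (hm : Tendsto (fun p => M (p + 1) / M p) atTop atTop)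
    (hγ : ∃ μ > (0 : ℝ), ∃ a > (0 : ℝ), ∀ p q : ℕ, p ≤ q →
      (M (p + 1) / M p) / ((p : ℝ) + 1) ^ μ ≤ a * ((M (q + 1) / M q) / ((q : ℝ) + 1) ^ μ))
    (hflat : ∃ e : ℝ → ℝ, ContinuousOn e (Set.Ioi 0) ∧ (∀ x, 0 < x → 0 ≤ e x) ∧
      ∃ K₁ > (0 : ℝ), ∃ K₂ > (0 : ℝ), ∃ K₃ > (0 : ℝ), ∃ K₄ > (0 : ℝ), ∀ x : ℝ, 0 < x →
        K₁ * (⨅ q : ℕ, M q * (K₂ / x) ^ q) ≤ e x ∧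
        e x ≤ K₃ * (⨅ q : ℕ, M q * (K₄ / x) ^ q))
    (hmom : ∀ φ : ℝ → ℂ, ContinuousOn φ (Set.Ioi 0) →
      (∃ h > (0 : ℝ), ∃ S : ℝ, ∀ p : ℕ, ∀ x : ℝ, 0 < x → x ^ p * ‖φ x‖ ≤ S * h ^ p * M p) →
      ∃ C > (0 : ℝ), ∃ h > (0 : ℝ), ∀ p : ℕ,
        ‖∫ x in Set.Ioi (0 : ℝ), (x : ℂ) ^ p * φ x‖ ≤ C * h ^ p * M (p + 1)) :
    ∃ C₀ > (0 : ℝ), ∃ H > (1 : ℝ), ∀ p,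
      Real.log ((M (p + 2) / M (p + 1)) / (M (p + 1) / M p)) ≤ C₀ * H ^ (p + 1) := by
  obtain ⟨e, hec, henn, K₁, hK₁, K₂, hK₂, K₃, hK₃, K₄, hK₄, hbd⟩ := hflat
  set m : ℕ → ℝ := fun p => M (p + 1) / M p with hm_def
  have hmpos : ∀ p, 0 < m p := fun p => div_pos (hpos _) (hpos _)
  -- the kernel e, bounded above, gives an element of C_{M}(0,∞)
  have key_upper : ∀ p : ℕ, ∀ x : ℝ, 0 < x →
      (⨅ q : ℕ, M q * (K₄ / x) ^ q) ≤ M p * (K₄ / x) ^ p := by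
    intro p x hx
    refine ciInf_le ⟨0, ?_⟩ p
    rintro y ⟨q, rfl⟩
    exact mul_nonneg (hpos q).le (by positivity)
  -- integrability of x^p * e x on Ioi 0
  have hmeas : ∀ p : ℕ, AEStronglyMeasurable (fun x : ℝ => x ^ p * e x)
      (volume.restrict (Set.Ioi (0:ℝ))) := by
    intro p
    exact (ContinuousOn.mul (continuousOn_pow p) hec).aestronglyMeasurable measurableSet_Ioi
  have hInt : ∀ p : ℕ, IntegrableOn (fun x : ℝ => x ^ p * e x) (Set.Ioi 0) := by
    intro p
    have h01 : IntegrableOn (fun x : ℝ => x ^ p * e x) (Set.Ioc 0 1) := by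
      refine Integrable.mono' (g := fun _ => K₃ * (M p * K₄ ^ p))
        (integrable_const _) ((hmeas p).mono_set Set.Ioc_subset_Ioi_self) ?_
      rw [ae_restrict_iff' measurableSet_Ioc]
      filter_upwards with x hx
      have hx0 : 0 < x := hx.1
      have h1 : x ^ p * e x ≤ x ^ p * (K₃ * (M p * (K₄ / x) ^ p)) := by
        have := (hbd x hx0).2
        have := key_upper p x hx0
        nlinarith [pow_pos hx0 p, (hbd x hx0).2,
          mul_le_mul_of_nonneg_left (key_upper p x hx0) hK₃.le]
      have h2 : x ^ p * (K₃ * (M p * (K₄ / x) ^ p)) = K₃ * (M p * K₄ ^ p) := by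
        rw [div_pow]
        field_simp [hx0.ne']
        all_goals ring
      rw [Real.norm_eq_abs, abs_of_nonneg (mul_nonneg (pow_nonneg hx0.le p) (henn x hx0))]
      linarith
    have h1i : IntegrableOn (fun x : ℝ => x ^ p * e x) (Set.Ioi 1) := by
      have hrint : IntegrableOn (fun x : ℝ => K₃ * (M (p+2) * K₄ ^ (p+2)) * x ^ (-2 : ℝ))
          (Set.Ioi (1:ℝ)) :=
        (integrableOn_Ioi_rpow_of_lt (by norm_num) one_pos).const_mul _
      refine Integrable.mono' hrint ((hmeas p).mono_set (Set.Ioi_subset_Ioi zero_le_one)) ?_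
      rw [ae_restrict_iff' measurableSet_Ioi]
      filter_upwards with x hx
      have hx1 : (1:ℝ) < x := hx
      have hx0 : (0:ℝ) < x := lt_trans one_pos hx1
      have h1 : x ^ p * e x ≤ x ^ p * (K₃ * (M (p+2) * (K₄ / x) ^ (p+2))) := by
        have h' := mul_le_mul_of_nonneg_left (key_upper (p+2) x hx0) hK₃.le
        have h'' := (hbd x hx0).2
        nlinarith [pow_pos hx0 p]
      have h2 : x ^ p * (K₃ * (M (p+2) * (K₄ / x) ^ (p+2)))
          = K₃ * (M (p+2) * K₄ ^ (p+2)) * x ^ (-2 : ℝ) := by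
        rw [Real.rpow_neg hx0.le, show ((2:ℝ) = ((2:ℕ):ℝ)) by norm_num, Real.rpow_natCast, div_pow]
        field_simp [hx0.ne']
        all_goals ring
      rw [Real.norm_eq_abs, abs_of_nonneg (mul_nonneg (by positivity) (henn x hx0))]
      linarith
    have : Set.Ioi (0:ℝ) = Set.Ioc 0 1 ∪ Set.Ioi 1 := (Set.Ioc_union_Ioi_eq_Ioi zero_le_one).symm
    rw [this]
    exact h01.union h1i
  -- apply hmom to φ = e (complexified)
  obtain ⟨C, hC, h, hh, hCh⟩ := hmom (fun x => (e x : ℂ))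
    (Complex.continuous_ofReal.comp_continuousOn hec)
    (by
      refine ⟨K₄, hK₄, K₃, fun p x hx => ?_⟩
      have h1 : ‖((e x : ℂ))‖ = e x := by
        rw [Complex.norm_real, Real.norm_eq_abs, abs_of_nonneg (henn x hx)]
      rw [h1]
      have h' := mul_le_mul_of_nonneg_left (key_upper p x hx) hK₃.le
      have h'' := (hbd x hx).2
      have h3 : x ^ p * e x ≤ x ^ p * (K₃ * (M p * (K₄ / x) ^ p)) := by
        nlinarith [pow_pos hx p]
      have h2 : x ^ p * (K₃ * (M p * (K₄ / x) ^ p)) = K₃ * K₄ ^ p * M p := by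
        rw [div_pow]; field_simp [hx.ne']; all_goals ring
      linarith)
  -- the complex moment equals the real one
  have hmom_real : ∀ p : ℕ, ∫ x in Set.Ioi (0:ℝ), x ^ p * e x ≤ C * h ^ p * M (p + 1) := by
    intro p
    have hcast : (∫ x in Set.Ioi (0:ℝ), (x : ℂ) ^ p * (e x : ℂ))
        = ((∫ x in Set.Ioi (0:ℝ), x ^ p * e x : ℝ) : ℂ) := by
      rw [show (fun x : ℝ => (x:ℂ) ^ p * (e x : ℂ)) = fun x : ℝ => ((x ^ p * e x : ℝ) : ℂ)
        from funext fun x => by push_cast; ring]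
      exact integral_ofReal
    have := hCh p
    rw [hcast, Complex.norm_real, Real.norm_eq_abs] at this
    exact le_trans (le_abs_self _) this
  -- lower bound for the moment
  have hmom_low : ∀ p : ℕ,
      K₁ * K₂ ^ (p+1) * M (p+1) * Real.log (m (p+1) / m p)
        ≤ ∫ x in Set.Ioi (0:ℝ), x ^ p * e x := by
    intro p
    set a := K₂ * m p with ha_def
    set b := K₂ * m (p+1) with hb_def
    have ha : 0 < a := mul_pos hK₂ (hmpos p)
    have hab : a ≤ b := by
      have := hlc (Nat.le_succ p)
      exact mul_le_mul_of_nonneg_left this hK₂.le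
    have hb : 0 < b := lt_of_lt_of_le ha hab
    -- pointwise lower bound on Ioc a b
    have hpt : ∀ x ∈ Set.Ioc a b,
        K₁ * K₂ ^ (p+1) * M (p+1) * x⁻¹ ≤ x ^ p * e x := by
      intro x hx
      have hx0 : 0 < x := lt_trans ha hx.1
      set t := K₂ / x with ht_def
      have ht0 : 0 < t := div_pos hK₂ hx0
      have htp : t * m p ≤ 1 := by
        rw [ht_def, div_mul_eq_mul_div, div_le_one hx0]
        calc K₂ * m p = a := rfl
          _ ≤ x := hx.1.le
      have htq : 1 ≤ t * m (p+1) := by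
        rw [ht_def, div_mul_eq_mul_div, le_div_iff₀ hx0]
        calc (1:ℝ) * x = x := one_mul x
          _ ≤ b := hx.2
          _ = K₂ * m (p+1) := rfl
      -- the infimum is attained (from below) at q = p+1
      have hinf : ∀ q : ℕ, M (p+1) * t ^ (p+1) ≤ M q * t ^ q := by
        intro q
        rcases le_or_gt q (p+1) with hq | hq
        · refine stmt12_chain_down (fun k => M k * t ^ k) q (p+1) hq ?_
          intro k hk hk'
          show M (k+1) * t ^ (k+1) ≤ M k * t ^ k
          have hk'' : k ≤ p := Nat.lt_succ_iff.mp hk'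
          have hmk : m k ≤ m p := hlc hk''
          have : M (k+1) * t ^ (k+1) = (M k * t ^ k) * (m k * t) := by
            have hMk := (hpos k).ne'
            simp only [hm_def]
            field_simp [hm_def]
            all_goals ring
          rw [this]
          have h1 : m k * t ≤ 1 := by
            calc m k * t ≤ m p * t := mul_le_mul_of_nonneg_right hmk ht0.le
              _ = t * m p := mul_comm _ _
              _ ≤ 1 := htp
          nlinarith [mul_pos (hpos k) (pow_pos ht0 k)]
        · refine stmt12_chain_up (fun k => M k * t ^ k) (p+1) q hq.le ?_
          intro k hk
          show M k * t ^ k ≤ M (k+1) * t ^ (k+1)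
          have hmk : m (p+1) ≤ m k := hlc hk
          have : M (k+1) * t ^ (k+1) = (M k * t ^ k) * (m k * t) := by
            have hMk := (hpos k).ne'
            simp only [hm_def]
            field_simp [hm_def]
            all_goals ring
          rw [this]
          have h1 : 1 ≤ m k * t := by
            calc (1:ℝ) ≤ t * m (p+1) := htq
              _ = m (p+1) * t := mul_comm _ _
              _ ≤ m k * t := mul_le_mul_of_nonneg_right hmk ht0.le
          nlinarith [mul_pos (hpos k) (pow_pos ht0 k)]
      have hlow := (hbd x hx0).1
      have hinf' : M (p+1) * t ^ (p+1) ≤ ⨅ q : ℕ, M q * (K₂ / x) ^ q := by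
        exact le_ciInf hinf
      have he : K₁ * (M (p+1) * t ^ (p+1)) ≤ e x :=
        le_trans (mul_le_mul_of_nonneg_left hinf' hK₁.le) hlow
      have heq : x ^ p * (K₁ * (M (p+1) * t ^ (p+1)))
          = K₁ * K₂ ^ (p+1) * M (p+1) * x⁻¹ := by
        rw [ht_def, div_pow]
        field_simp [hx0.ne']
        all_goals ring
      calc K₁ * K₂ ^ (p+1) * M (p+1) * x⁻¹
          = x ^ p * (K₁ * (M (p+1) * t ^ (p+1))) := heq.symm
        _ ≤ x ^ p * e x := mul_le_mul_of_nonneg_left he (by positivity)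
    -- compute the integral of the lower bound over Ioc a b
    have hIinv : IntegrableOn (fun x : ℝ => K₁ * K₂ ^ (p+1) * M (p+1) * x⁻¹)
        (Set.Ioc a b) := by
      refine (((ContinuousOn.integrableOn_Icc ?_).mono_set Set.Ioc_subset_Icc_self :
        Integrable (fun x : ℝ => x⁻¹) (volume.restrict (Set.Ioc a b)))).const_mul _
      exact continuousOn_inv₀.mono (fun x hx => ne_of_gt (lt_of_lt_of_le ha hx.1))
    have hIe : IntegrableOn (fun x : ℝ => x ^ p * e x) (Set.Ioc a b) :=
      (hInt p).mono_set (fun x hx => lt_trans ha hx.1)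
    have step1 : ∫ x in Set.Ioc a b, K₁ * K₂ ^ (p+1) * M (p+1) * x⁻¹
        ≤ ∫ x in Set.Ioc a b, x ^ p * e x :=
      setIntegral_mono_on hIinv hIe measurableSet_Ioc hpt
    have step2 : ∫ x in Set.Ioc a b, x ^ p * e x ≤ ∫ x in Set.Ioi (0:ℝ), x ^ p * e x := by
      refine setIntegral_mono_set (hInt p) ?_ ?_
      · rw [EventuallyLE, ae_restrict_iff' measurableSet_Ioi]
        filter_upwards with x hx
        exact mul_nonneg (pow_nonneg (le_of_lt hx) p) (henn x hx)
      · exact HasSubset.Subset.eventuallyLE (fun x hx => lt_trans ha hx.1)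
    have hcomp : ∫ x in Set.Ioc a b, K₁ * K₂ ^ (p+1) * M (p+1) * x⁻¹
        = K₁ * K₂ ^ (p+1) * M (p+1) * Real.log (m (p+1) / m p) := by
      rw [MeasureTheory.integral_const_mul]
      have : ∫ x in Set.Ioc a b, x⁻¹ = Real.log (b / a) := by
        rw [← intervalIntegral.integral_of_le hab]
        exact integral_inv_of_pos ha hb
      rw [this]
      congr 1
      rw [hb_def, ha_def, mul_div_mul_left _ _ (ne_of_gt hK₂)]
    have hfin := le_trans step1 step2
    rw [hcomp] at hfin
    exact hfin
  -- conclude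
  refine ⟨C / (K₁ * K₂), div_pos hC (mul_pos hK₁ hK₂), max 2 (h / K₂),
    lt_of_lt_of_le one_lt_two (le_max_left _ _), fun p => ?_⟩
  set H := max 2 (h / K₂) with hH_def
  have hH1 : (1:ℝ) ≤ H := le_trans one_le_two (le_max_left _ _)
  have hHh : h / K₂ ≤ H := le_max_right _ _
  have hkey : K₁ * K₂ ^ (p+1) * M (p+1) * Real.log (m (p+1) / m p)
      ≤ C * h ^ p * M (p + 1) := le_trans (hmom_low p) (hmom_real p)
  have hden : 0 < K₁ * K₂ ^ (p+1) * M (p+1) := mul_pos (mul_pos hK₁ (pow_pos hK₂ _)) (hpos _)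
  have hlog : Real.log (m (p+1) / m p) ≤ C * h ^ p * M (p+1) / (K₁ * K₂ ^ (p+1) * M (p+1)) := by
    rw [le_div_iff₀ hden]
    nlinarith [hkey]
  have heq2 : C * h ^ p * M (p+1) / (K₁ * K₂ ^ (p+1) * M (p+1))
      = C / (K₁ * K₂) * (h / K₂) ^ p := by
    have hM := (hpos (p+1)).ne'
    rw [div_pow]
    field_simp [hK₂.ne']
    all_goals ring
  have hpow : (h / K₂) ^ p ≤ H ^ (p+1) := by
    calc (h / K₂) ^ p ≤ H ^ p := pow_le_pow_left₀ (by positivity) hHh p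
      _ ≤ H ^ (p+1) := pow_le_pow_right₀ hH1 (Nat.le_succ p)
  have hgoal : Real.log ((M (p + 2) / M (p + 1)) / (M (p + 1) / M p))
      = Real.log (m (p+1) / m p) := rfl
  rw [hgoal]
  calc Real.log (m (p+1) / m p)
      ≤ C / (K₁ * K₂) * (h / K₂) ^ p := by rw [← heq2]; exact hlog
    _ ≤ C / (K₁ * K₂) * H ^ (p+1) :=
        mul_le_mul_of_nonneg_left hpow (by positivity)
end

section
/- Let M be a log-convex sequence with M_0 = 1 such that M̃ (defined by M̃_p := M_{p+1}·log(e²m_{p+1}/m_p)) satisfies (sm). Then M satisfies (sm). -/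
/-- Let `M` be log-convex with `M 0 = 1`, and `M̃ p = M (p+1) * log (e² m_{p+1} / m_p)`.
If `M̃` satisfies `(sm)`, then so does `M`. -/
theorem stmt_15 (M : ℕ → ℝ) (hpos : ∀ p, 0 < M p) (h0 : M 0 = 1)
    (hlc : ∀ p, (M (p + 1)) ^ 2 ≤ M p * M (p + 2))
    (Mt : ℕ → ℝ)
    (hMt : ∀ p, Mt p =
      M (p + 1) * Real.log (Real.exp 2 * (M (p + 2) / M (p + 1)) / (M (p + 1) / M p)))
    (hsmMt : ∃ C₀ > (0 : ℝ), ∃ H > (1 : ℝ), ∀ p,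
      Real.log ((Mt (p + 2) / Mt (p + 1)) / (Mt (p + 1) / Mt p)) ≤ C₀ * H ^ (p + 1)) :
    ∃ C₀ > (0 : ℝ), ∃ H > (1 : ℝ), ∀ p,
      Real.log ((M (p + 2) / M (p + 1)) / (M (p + 1) / M p)) ≤ C₀ * H ^ (p + 1) := by
  obtain ⟨C₀, hC₀, H, hH, hsm⟩ := hsmMt
  set δ : ℕ → ℝ := fun p => Real.log ((M (p + 2) / M (p + 1)) / (M (p + 1) / M p))
    with hδdef
  have hδ : ∀ p, δ p = Real.log (M (p+2)) - 2 * Real.log (M (p+1)) + Real.log (M p) := by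
    intro p
    simp only [hδdef]
    rw [Real.log_div (ne_of_gt (div_pos (hpos _) (hpos _)))
          (ne_of_gt (div_pos (hpos _) (hpos _))),
        Real.log_div (ne_of_gt (hpos _)) (ne_of_gt (hpos _)),
        Real.log_div (ne_of_gt (hpos _)) (ne_of_gt (hpos _))]
    ring
  have hδnn : ∀ p, 0 ≤ δ p := by
    intro p
    apply Real.log_nonneg
    rw [le_div_iff₀ (div_pos (hpos _) (hpos _)), one_mul,
        div_le_div_iff₀ (hpos _) (hpos _)]
    nlinarith [hlc p]
  have hc : ∀ p, 0 < 2 + δ p := fun p => by linarith [hδnn p]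
  have hMt2 : ∀ p, Mt p = M (p + 1) * (2 + δ p) := by
    intro p
    rw [hMt p, mul_div_assoc,
        Real.log_mul (Real.exp_ne_zero 2)
          (ne_of_gt (div_pos (div_pos (hpos _) (hpos _)) (div_pos (hpos _) (hpos _)))),
        Real.log_exp]
  have hMtpos : ∀ p, 0 < Mt p := fun p => by
    rw [hMt2]; exact mul_pos (hpos _) (hc p)
  have hE : ∀ p, Real.log ((Mt (p + 2) / Mt (p + 1)) / (Mt (p + 1) / Mt p))
      = δ (p+1) + Real.log (2 + δ (p+2)) - 2 * Real.log (2 + δ (p+1))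
        + Real.log (2 + δ p) := by
    intro p
    rw [Real.log_div (ne_of_gt (div_pos (hMtpos _) (hMtpos _)))
          (ne_of_gt (div_pos (hMtpos _) (hMtpos _))),
        Real.log_div (ne_of_gt (hMtpos _)) (ne_of_gt (hMtpos _)),
        Real.log_div (ne_of_gt (hMtpos _)) (ne_of_gt (hMtpos _)),
        hMt2 p, hMt2 (p+1), hMt2 (p+2),
        Real.log_mul (ne_of_gt (hpos _)) (ne_of_gt (hc _)),
        Real.log_mul (ne_of_gt (hpos _)) (ne_of_gt (hc _)),
        Real.log_mul (ne_of_gt (hpos _)) (ne_of_gt (hc _)),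
        hδ (p+1)]
    have h1 : p + 1 + 2 = p + 3 := rfl
    have h2 : p + 2 + 1 = p + 3 := rfl
    rw [h1, h2]
    ring
  have hlog2 : Real.log 2 < 0.6931471808 := Real.log_two_lt_d9
  have hlog2' : (0:ℝ) < Real.log 2 := Real.log_pos (by norm_num)
  have key : ∀ p, δ (p+1) ≤ (2*C₀+2) * H ^ (p+1) := by
    intro p
    have h1 := hsm p
    rw [hE p] at h1
    have h2 : Real.log 2 ≤ Real.log (2 + δ (p+2)) :=
      Real.log_le_log (by norm_num) (by linarith [hδnn (p+2)])
    have h3 : Real.log 2 ≤ Real.log (2 + δ p) :=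
      Real.log_le_log (by norm_num) (by linarith [hδnn p])
    have h4 : Real.log (2 + δ (p+1)) ≤ 2 * Real.log 2 + δ (p+1)/4 - 1/2 := by
      have h5 := Real.log_le_sub_one_of_pos
        (show (0:ℝ) < (2 + δ (p+1))/4 by linarith [hδnn (p+1)])
      rw [Real.log_div (by linarith [hδnn (p+1)]) (by norm_num)] at h5
      have h6 : Real.log 4 = 2 * Real.log 2 := by
        rw [show (4:ℝ) = 2^2 by norm_num, Real.log_pow]
        push_cast; ring
      linarith
    have hHp : (1:ℝ) ≤ H ^ (p+1) := one_le_pow₀ hH.le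
    nlinarith [hC₀, hHp]
  refine ⟨2*C₀+2 + max (δ 0) 0, by positivity, H, hH, ?_⟩
  intro p
  match p with
  | 0 =>
    have hm : δ 0 ≤ max (δ 0) 0 := le_max_left _ _
    have hH1 : (1:ℝ) ≤ H ^ (0+1) := by simpa using hH.le
    have hmr : (0:ℝ) ≤ max (δ 0) 0 := le_max_right _ _
    show δ 0 ≤ _
    nlinarith
  | Nat.succ q =>
    have hk := key q
    have hmono : H ^ (q+1) ≤ H ^ (q+1+1) :=
      pow_le_pow_right₀ (by linarith) (by omega)
    have hmr : (0:ℝ) ≤ max (δ 0) 0 := le_max_right _ _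
    have hHp : (0:ℝ) < H ^ (q+1+1) := pow_pos (by linarith) _
    show δ (q+1) ≤ (2*C₀+2 + max (δ 0) 0) * H ^ (q+1+1)
    nlinarith
end

section
/- Given any growth control function g: [0,∞) → [1,∞) (strictly increasing, g(0) = 1, g(t) → ∞) and any strictly increasing sequence of integers (p_j)_{j∈ℕ₀} with p_0 = 0, there exists a weight sequence M with quotients m_p satisfying m_p ≤ g(p) for all p and m_{p_j} = g(p_j) for all j. -/
open Filter

/-- Given a growth control function `g` and a strictly increasing sequence of
integers `(p_j)` with `p 0 = 0`, there exists a weight sequence `M` whose quotients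
satisfy `m_p ≤ g p` for all `p` and `m_{p_j} = g (p_j)` for all `j`. -/
theorem stmt_16 (g : ℝ → ℝ) (hgmono : StrictMonoOn g (Set.Ici 0))
    (hg0 : g 0 = 1) (hg1 : ∀ t : ℝ, 0 ≤ t → 1 ≤ g t)
    (hgtop : Tendsto g atTop atTop)
    (p : ℕ → ℕ) (hp : StrictMono p) (hp0 : p 0 = 0) :
    ∃ M : ℕ → ℝ, (∀ q, 0 < M q) ∧ M 0 = 1 ∧
      Monotone (fun q => M (q + 1) / M q) ∧
      Tendsto (fun q => M (q + 1) / M q) atTop atTop ∧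
      (∀ q : ℕ, M (q + 1) / M q ≤ g q) ∧
      (∀ j : ℕ, M (p j + 1) / M (p j) = g (p j)) := by
  -- J q : greatest index j with p j ≤ q
  set J : ℕ → ℕ := fun q => Nat.findGreatest (fun j => p j ≤ q) q with hJ
  have hpJ : ∀ q, p (J q) ≤ q := by
    intro q
    exact Nat.findGreatest_spec (P := fun j => p j ≤ q) (Nat.zero_le q) (by simp [hp0])
  have hJmono : Monotone J := by
    intro a b hab
    exact Nat.le_findGreatest ((hp.le_apply).trans ((hpJ a).trans hab))
      ((hpJ a).trans hab)
  have hJp : ∀ j, J (p j) = j := by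
    intro j
    have h1 : j ≤ J (p j) := Nat.le_findGreatest hp.le_apply le_rfl
    have h2 : J (p j) ≤ j := hp.le_iff_le.mp (hpJ (p j))
    omega
  -- the quotient sequence
  set m : ℕ → ℝ := fun q => g (p (J q)) with hm
  have hm1 : ∀ q, 1 ≤ m q := fun q => hg1 _ (by positivity)
  have hmpos : ∀ q, 0 < m q := fun q => lt_of_lt_of_le one_pos (hm1 q)
  have hmmono : Monotone m := by
    intro a b hab
    exact hgmono.monotoneOn (by simp) (by simp)
      (by exact_mod_cast hp.monotone (hJmono hab))
  set M : ℕ → ℝ := fun q => ∏ i ∈ Finset.range q, m i with hM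
  have hMpos : ∀ q, 0 < M q := fun q => Finset.prod_pos fun i _ => hmpos i
  have hquot : ∀ q, M (q + 1) / M q = m q := by
    intro q
    rw [hM]
    simp only [Finset.prod_range_succ]
    rw [mul_comm, mul_div_assoc, div_self (hMpos q).ne', mul_one]
  refine ⟨M, hMpos, by simp [hM], ?_, ?_, ?_, ?_⟩
  · intro a b hab
    simpa only [hquot] using hmmono hab
  · have hJtop : Tendsto J atTop atTop :=
      hJmono.tendsto_atTop_atTop (fun n => ⟨p n, by rw [hJp]⟩)
    have hpJtop : Tendsto (fun q => p (J q)) atTop atTop := hp.tendsto_atTop.comp hJtop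
    have : Tendsto m atTop atTop :=
      hgtop.comp (tendsto_natCast_atTop_atTop.comp hpJtop)
    simpa only [hquot] using this
  · intro q
    rw [hquot]
    exact hgmono.monotoneOn (by simp) (by simp) (by exact_mod_cast hpJ q)
  · intro j
    simp only [hquot, hm, hJp]
end

section
/- Let (p_j)_{j∈ℕ₀} be a strictly increasing sequence of integers with p_0 = 0 and sup_{j∈ℕ} p_{j+1}/p_j = ∞, let g be a growth control function, and let M be the weight sequence whose quotients satisfy m_{p_j} = g(p_j) and m_p = m_{p_j} for p_j < p < p_{j+1}. Then γ(M) = 0; in particular, for no β > 0 is the sequence (m_p/(p+1)^β)_p almost increasing. -/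
open Filter

/-- If the quotients of the weight sequence `M` are given by `m_{p_j} = g (p_j)` and
constant on the gaps, and `sup_j p_{j+1} / p_j = ∞`, then `γ(M) = 0`: for no `β > 0`
is the sequence `(m_q / (q+1)^β)_q` almost increasing. -/
theorem stmt_17 (g : ℝ → ℝ) (hgmono : StrictMonoOn g (Set.Ici 0))
    (hg0 : g 0 = 1) (hg1 : ∀ t : ℝ, 0 ≤ t → 1 ≤ g t)
    (hgtop : Tendsto g atTop atTop)
    (p : ℕ → ℕ) (hp : StrictMono p) (hp0 : p 0 = 0)
    (hsup : ∀ C : ℝ, ∃ j : ℕ, 1 ≤ j ∧ C < (p (j + 1) : ℝ) / (p j : ℝ))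
    (M : ℕ → ℝ) (hpos : ∀ q, 0 < M q) (h0 : M 0 = 1)
    (hlc : Monotone (fun q => M (q + 1) / M q))
    (hm : Tendsto (fun q => M (q + 1) / M q) atTop atTop)
    (hquotj : ∀ j : ℕ, M (p j + 1) / M (p j) = g (p j))
    (hquotgap : ∀ j q : ℕ, p j < q → q < p (j + 1) →
      M (q + 1) / M q = M (p j + 1) / M (p j)) :
    ∀ β : ℝ, 0 < β → ¬ ∃ H : ℝ, 1 ≤ H ∧ ∀ q r : ℕ, q ≤ r →
      (M (q + 1) / M q) / ((q : ℝ) + 1) ^ β ≤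
        H * ((M (r + 1) / M r) / ((r : ℝ) + 1) ^ β) := by
  intro β hβ
  rintro ⟨H, hH1, hAI⟩
  set K := H ^ (β⁻¹) with hKdef
  have hK1 : 1 ≤ K := Real.one_le_rpow hH1 (by positivity)
  have hKpos : 0 < K := lt_of_lt_of_le one_pos hK1
  obtain ⟨j, hj1, hjC⟩ := hsup (2 * K)
  have hpj1 : 1 ≤ p j := by
    have := hp.le_apply (x := j)
    omega
  have hlt : p j < p (j + 1) := hp (Nat.lt_succ_self j)
  set q := p j with hq
  set r := p (j + 1) - 1 with hr
  have hr1 : r + 1 = p (j + 1) := by omega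
  have hqr : q ≤ r := by omega
  have hMq : M (q + 1) / M q = g q := hquotj j
  have hMr : M (r + 1) / M r = g q := by
    rcases eq_or_lt_of_le hqr with h | h
    · rw [← h]; exact hMq
    · rw [hquotgap j r h (by omega)]; exact hMq
  have hg := hAI q r hqr
  rw [hMq, hMr] at hg
  have hgpos : 0 < g q := lt_of_lt_of_le one_pos (hg1 q (by positivity))
  have hA : (0 : ℝ) < (q : ℝ) + 1 := by positivity
  have hB : (0 : ℝ) < (r : ℝ) + 1 := by positivity
  have hApow : (0 : ℝ) < ((q : ℝ) + 1) ^ β := Real.rpow_pos_of_pos hA β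
  have hBpow : (0 : ℝ) < ((r : ℝ) + 1) ^ β := Real.rpow_pos_of_pos hB β
  rw [mul_div_assoc', div_le_div_iff₀ hApow hBpow] at hg
  -- hg : g q * ((r+1)^β) ≤ H * g q * ((q+1)^β)
  have key : ((r : ℝ) + 1) ^ β ≤ H * ((q : ℝ) + 1) ^ β := by
    nlinarith [hg, hgpos, hBpow, hApow]
  have hβne : β ≠ 0 := ne_of_gt hβ
  have hHpos : (0 : ℝ) < H := lt_of_lt_of_le one_pos hH1
  have key2 : (((r : ℝ) + 1) ^ β) ^ β⁻¹ ≤ (H * ((q : ℝ) + 1) ^ β) ^ β⁻¹ :=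
    Real.rpow_le_rpow (le_of_lt hBpow) key (by positivity)
  rw [Real.rpow_rpow_inv (le_of_lt hB) hβne, Real.mul_rpow (le_of_lt hHpos) (le_of_lt hApow),
    Real.rpow_rpow_inv (le_of_lt hA) hβne] at key2
  -- key2 : (r : ℝ) + 1 ≤ K * ((q : ℝ) + 1)
  have hrp : ((r : ℝ) + 1) = (p (j + 1) : ℝ) := by
    rw [← hr1]; push_cast; ring
  have hq1 : (1 : ℝ) ≤ (q : ℝ) := by exact_mod_cast hpj1
  have hqpos : (0 : ℝ) < (q : ℝ) := lt_of_lt_of_le one_pos hq1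
  have hdiv : (2 : ℝ) * K * (q : ℝ) < (p (j + 1) : ℝ) := by
    rw [lt_div_iff₀ hqpos] at hjC
    exact hjC
  rw [hrp] at key2
  nlinarith [key2, hdiv, hKpos, hq1]
end

section
/- Let M be a weight sequence with log-convex quotient sequence m (i.e., m_{p+1}/m_p is nondecreasing in p) and such that (log m_p)^{1/p} → ∞. Then the sequence M̃ with M̃_p = M_{p+1}·log(e²m_{p+1}/m_p) has quotients m̃_p ≥ m_{p+1} for all p, and consequently ω(M̃) := liminf_p log(m̃_p)/log(p) = ∞. -/
open Filter

/-- If `M` is a weight sequence whose quotient sequence `m` is log-convex and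
`(log m_p)^{1/p} → ∞`, then the quotients of `M̃` satisfy `m̃_p ≥ m_{p+1}` and
`ω(M̃) = ∞`, i.e. `log (m̃_p) / log p → ∞`. -/
theorem stmt_18 (M : ℕ → ℝ) (hpos : ∀ p, 0 < M p) (h0 : M 0 = 1)
    (m : ℕ → ℝ) (hmdef : ∀ p, m p = M (p + 1) / M p)
    (hlc : Monotone m) (hminf : Tendsto m atTop atTop)
    (hmlc : ∀ p, (m (p + 1)) ^ 2 ≤ m p * m (p + 2))
    (hfast : Tendsto (fun p : ℕ => (Real.log (m p)) ^ (1 / (p : ℝ))) atTop atTop)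
    (Mt : ℕ → ℝ)
    (hMt : ∀ p, Mt p = M (p + 1) * Real.log (Real.exp 2 * m (p + 1) / m p)) :
    (∀ p : ℕ, m (p + 1) ≤ Mt (p + 1) / Mt p) ∧
    Tendsto (fun p : ℕ => Real.log (Mt (p + 1) / Mt p) / Real.log (p : ℝ)) atTop atTop := by
  have hm : ∀ p, 0 < m p := fun p => by
    rw [hmdef]; exact div_pos (hpos _) (hpos _)
  set L : ℕ → ℝ := fun p => Real.log (Real.exp 2 * m (p + 1) / m p) with hLdef
  have hL2 : ∀ p, 2 ≤ L p := by
    intro p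
    have h1 : Real.exp 2 ≤ Real.exp 2 * m (p + 1) / m p := by
      rw [mul_div_assoc]
      nth_rewrite 1 [← mul_one (Real.exp 2)]
      exact mul_le_mul_of_nonneg_left ((one_le_div (hm p)).2 (hlc (Nat.le_succ p)))
        (Real.exp_pos 2).le
    calc (2 : ℝ) = Real.log (Real.exp 2) := (Real.log_exp 2).symm
    _ ≤ L p := Real.log_le_log (Real.exp_pos 2) h1
  have hLpos : ∀ p, 0 < L p := fun p => lt_of_lt_of_le two_pos (hL2 p)
  have hLmono : ∀ p, L p ≤ L (p + 1) := by
    intro p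
    apply Real.log_le_log (div_pos (mul_pos (Real.exp_pos 2) (hm _)) (hm _))
    rw [mul_div_assoc, mul_div_assoc]
    apply mul_le_mul_of_nonneg_left _ (Real.exp_pos 2).le
    rw [div_le_div_iff₀ (hm p) (hm (p + 1))]
    calc m (p + 1) * m (p + 1) = m (p + 1) ^ 2 := (sq _).symm
    _ ≤ m p * m (p + 2) := hmlc p
    _ = m (p + 2) * m p := mul_comm _ _
  have hratio : ∀ p, Mt (p + 1) / Mt p = m (p + 1) * (L (p + 1) / L p) := by
    intro p
    have h1 : M (p + 1) ≠ 0 := (hpos _).ne'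
    have h2 : L p ≠ 0 := (hLpos p).ne'
    have hMt' : ∀ q, Mt q = M (q + 1) * L q := fun q => hMt q
    rw [hMt', hMt', hmdef]
    field_simp
  have part1 : ∀ p, m (p + 1) ≤ Mt (p + 1) / Mt p := by
    intro p
    rw [hratio p]
    nth_rewrite 1 [← mul_one (m (p + 1))]
    exact mul_le_mul_of_nonneg_left ((one_le_div (hLpos p)).2 (hLmono p)) (hm _).le
  refine ⟨part1, ?_⟩
  -- eventually `4^p ≤ log (m p)`
  have hlogm : ∀ᶠ p in atTop, (4 : ℝ) ^ p ≤ Real.log (m p) := by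
    have h4 := hfast.eventually (eventually_ge_atTop (4 : ℝ))
    have h1 := hminf.eventually (eventually_ge_atTop (1 : ℝ))
    filter_upwards [h4, h1, eventually_ge_atTop 1] with p hp4 hp1 hp
    have hx : (0 : ℝ) ≤ Real.log (m p) := Real.log_nonneg hp1
    have hkey : ((Real.log (m p)) ^ (1 / (p : ℝ))) ^ p = Real.log (m p) := by
      rw [← Real.rpow_natCast (Real.log (m p) ^ (1 / (p : ℝ))) p, ← Real.rpow_mul hx,
        one_div_mul_cancel (Nat.cast_ne_zero.mpr (by omega) : (p : ℝ) ≠ 0), Real.rpow_one]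
    calc (4 : ℝ) ^ p ≤ ((Real.log (m p)) ^ (1 / (p : ℝ))) ^ p :=
      pow_le_pow_left₀ (by norm_num) hp4 p
    _ = Real.log (m p) := hkey
  obtain ⟨N, hN⟩ := eventually_atTop.1 hlogm
  refine tendsto_atTop_mono' atTop ?_ (tendsto_natCast_atTop_atTop (R := ℝ))
  · filter_upwards [eventually_ge_atTop (max N 2)] with p hp
    have hpN : N ≤ p + 1 := le_trans (le_trans (le_max_left N 2) hp) (Nat.le_succ p)
    have hp2 : 2 ≤ p := le_trans (le_max_right N 2) hp
    have hbound : (4 : ℝ) ^ (p + 1) ≤ Real.log (m (p + 1)) := hN (p + 1) hpN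
    have hlogp : 0 < Real.log (p : ℝ) :=
      Real.log_pos (by exact_mod_cast Nat.lt_of_lt_of_le one_lt_two hp2)
    rw [le_div_iff₀ hlogp]
    have hppos : (0 : ℝ) ≤ (p : ℝ) := Nat.cast_nonneg p
    have hstep1 : (p : ℝ) * Real.log p ≤ (p : ℝ) * (p : ℝ) := by
      apply mul_le_mul_of_nonneg_left _ hppos
      have := Real.log_le_sub_one_of_pos (x := (p : ℝ)) (by positivity)
      linarith
    have hstep2 : (p : ℝ) * (p : ℝ) ≤ (4 : ℝ) ^ p := by
      have h2p : (p : ℝ) ≤ (2 : ℝ) ^ p := by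
        exact_mod_cast (Nat.lt_two_pow_self (n := p)).le
      calc (p : ℝ) * (p : ℝ) ≤ (2 : ℝ) ^ p * (2 : ℝ) ^ p :=
        mul_le_mul h2p h2p hppos (by positivity)
      _ = (4 : ℝ) ^ p := by
        rw [← pow_add, ← two_mul, pow_mul]; norm_num
    have hstep3 : (4 : ℝ) ^ p ≤ (4 : ℝ) ^ (p + 1) :=
      pow_le_pow_right₀ (by norm_num) (Nat.le_succ p)
    have hstep4 : Real.log (m (p + 1)) ≤ Real.log (Mt (p + 1) / Mt p) :=
      Real.log_le_log (hm _) (part1 p)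
    linarith
end
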